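/- Let q : ℂ → ℂ be a Schwartz function and let k ∈ ℂ. Then F ↦ S^k_q[F] defines a bounded linear operator on L^∞(ℂ) which is a compact operator. -/

import Mathlib

/-!
For `F ∈ L^∞` the factors `e_{±k}` are unimodular and `q = O((1 + |w|)^{-4})`, so both solid
Cauchy transforms in `S^k_q[F]` act on functions dominated by `C (1 + |w|)^{-4}`; and since
`∂_z⁻¹ h = conj (∂̄⁻¹ (conj h))`, only `∂̄⁻¹` has to be studied. For such `G`, `∂̄⁻¹ G` is bounded,
Hölder-`1/2` continuous and `O(1/|z|)` at infinity, with constants linear in `C`. The Hölder bound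
comes from `|1/(z-w) - 1/(z'-w)| ≤ 2 |z - z'|^{1/2} (|z - w|^{-3/2} + |z' - w|^{-3/2})` and the
local integrability of `|u|^{-3/2}` in the plane. Hence `S^k_q` maps the unit ball of `L^∞` onto a
bounded, equicontinuous family of bounded continuous functions that is uniformly small outside
large discs, which is totally bounded by Arzelà–Ascoli on discs. Composing with the inclusion of
bounded continuous functions into `L^∞` gives the compact operator.
-/

open MeasureTheory Complex ComplexConjugate Filter Bornology
open scoped ENNReal Topology SchwartzMap

noncomputable section

/-- `e_k(z) = exp(i(conj k · z + k · conj z)/2)`. -/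
def ek (k z : ℂ) : ℂ := Complex.exp (Complex.I * (conj k * z + k * conj z) / 2)

/-- The solid Cauchy transform `∂̄⁻¹[h](z) = (1/π) ∫ h(w)/(z-w) dA(w)`. -/
def dbarInv (h : ℂ → ℂ) (z : ℂ) : ℂ := (Real.pi : ℂ)⁻¹ * ∫ w : ℂ, h w / (z - w)

/-- The solid Cauchy transform `∂_z⁻¹[h](z) = (1/π) ∫ h(w)/(conj z - conj w) dA(w)`. -/
def dzInv (h : ℂ → ℂ) (z : ℂ) : ℂ := (Real.pi : ℂ)⁻¹ * ∫ w : ℂ, h w / (conj z - conj w)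

/-- The operator `S^k_q[F] = ∂̄⁻¹[e_{-k} q ∂_z⁻¹[e_k conj(q) F]]`. -/
def Sk (k : ℂ) (q F : ℂ → ℂ) : ℂ → ℂ :=
  dbarInv fun z => ek (-k) z * q z * dzInv (fun w => ek k w * conj (q w) * F w) z

/-- The Fourier transform on `ℂ ≅ ℝ²`. -/
def FT (f : ℂ → ℂ) (ξ : ℂ) : ℂ :=
  ∫ z : ℂ, Complex.exp (-(2 * Real.pi * Complex.I) * ((z.re * ξ.re + z.im * ξ.im : ℝ) : ℂ)) * f z

/-- The inverse Fourier transform on `ℂ ≅ ℝ²`. -/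
def FTinv (f : ℂ → ℂ) (x : ℂ) : ℂ :=
  ∫ ξ : ℂ, Complex.exp ((2 * Real.pi * Complex.I) * ((x.re * ξ.re + x.im * ξ.im : ℝ) : ℂ)) * f ξ

/-- `D^s`, the Fourier multiplier with symbol `|ξ|^s`. -/
def Ds (s : ℝ) (f : ℂ → ℂ) : ℂ → ℂ :=
  FTinv fun ξ => ((‖ξ‖ ^ s : ℝ) : ℂ) * FT f ξ

/-- The weighted Sobolev norm
`‖q‖_{H^{s,s}} = max {‖q‖₂, ‖D^s q‖₂, ‖|·|^s q‖₂}`, where by Plancherel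
`‖D^s q‖₂ = ‖ |ξ|^s (FT q)(ξ) ‖₂`. -/
def HssNorm (s : ℝ) (q : ℂ → ℂ) : ℝ≥0∞ :=
  max (eLpNorm q 2 volume)
    (max (eLpNorm (fun ξ : ℂ => ((‖ξ‖ ^ s : ℝ) : ℂ) * FT q ξ) 2 volume)
      (eLpNorm (fun z : ℂ => ((‖z‖ ^ s : ℝ) : ℂ) * q z) 2 volume))

/-- The Cauchy–Riemann operator `∂̄ = (∂/∂z₁ + i ∂/∂z₂)/2`. -/
def dbar (G : ℂ → ℂ) (z : ℂ) : ℂ := (fderiv ℝ G z 1 + Complex.I * fderiv ℝ G z Complex.I) / 2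

end

open Metric Set
open scoped BoundedContinuousFunction

lemma continuous_of_norm_sub_le_mul_sqrt {X E : Type*} [SeminormedAddCommGroup X]
    [SeminormedAddCommGroup E] {f : X → E} {M : ℝ} (h : ∀ x y, ‖f x - f y‖ ≤ M * √‖x - y‖) :
    Continuous f := by
  refine continuous_iff_continuousAt.2 fun x => tendsto_iff_norm_sub_tendsto_zero.2 ?_
  refine squeeze_zero (fun _ => norm_nonneg _) (fun y => h y x) ?_
  have : Continuous fun y => M * √‖y - x‖ := by fun_prop
  simpa using this.tendsto x

lemma MeasureTheory.Lp.ae_norm_le_norm_top {α E : Type*} [MeasurableSpace α] {μ : Measure α}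
    [NormedAddCommGroup E] (F : Lp E ⊤ μ) : ∀ᵐ x ∂μ, ‖F x‖ ≤ ‖F‖ := by
  have h := ae_le_lpNorm_exponent_top (Lp.memLp F)
  rwa [← toReal_eLpNorm (Lp.aestronglyMeasurable F), ← Lp.norm_def] at h

namespace BoundedContinuousFunction

theorem totallyBounded_of_equicontinuous_of_small_off_compact {X E : Type*} [TopologicalSpace X]
    [NormedAddCommGroup E] [ProperSpace E] {A : Set (X →ᵇ E)} (hbdd : Bornology.IsBounded A)
    (hequi : Equicontinuous ((↑) : A → X → E))
    (hsmall : ∀ ε > 0, ∃ K : Set X, IsCompact K ∧ ∀ f ∈ A, ∀ x ∉ K, ‖f x‖ ≤ ε) :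
    TotallyBounded A := by
  rw [Metric.totallyBounded_iff]
  intro ε hε
  obtain ⟨K, hK, hAK⟩ := hsmall (ε / 4) (by positivity)
  obtain ⟨M, hM⟩ := hbdd.exists_norm_le
  have : CompactSpace K := isCompact_iff_compactSpace.1 hK
  let restrict : (X →ᵇ E) → (K →ᵇ E) := fun f => f.compContinuous ⟨Subtype.val, by fun_prop⟩
  have hcompact : IsCompact (closure (restrict '' A)) := by
    refine arzela_ascoli (closedBall 0 M) (isCompact_closedBall 0 M) _ ?_ fun x => ?_
    · rintro _ x ⟨f, hf, rfl⟩
      exact mem_closedBall_zero_iff.2 ((f.norm_coe_le_norm x).trans (hM f hf))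
    · rw [Metric.equicontinuousAt_iff_right]
      intro δ hδ
      filter_upwards [(continuous_subtype_val.tendsto x).eventually
        (Metric.equicontinuousAt_iff_right.1 (hequi x) δ hδ)] with y hy
      rintro ⟨_, f, hf, rfl⟩
      exact hy ⟨f, hf⟩
  obtain ⟨_, hsub, hfin, hcover⟩ := Metric.finite_approx_of_totallyBounded
    (hcompact.totallyBounded.subset subset_closure) (ε / 4) (by positivity)
  obtain ⟨s, hsA, hsfin, rfl⟩ := Set.exists_subset_image_finite_and.1 ⟨_, hsub, hfin, rfl⟩
  refine ⟨s, hsfin, fun f hf => ?_⟩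
  obtain ⟨_, ⟨g, hg, rfl⟩, hfg⟩ := mem_iUnion₂.1 (hcover (mem_image_of_mem restrict hf))
  refine mem_iUnion₂.2 ⟨g, hg, mem_ball.2 <| lt_of_le_of_lt ((dist_le (by positivity)).2
    fun x => ?_) (by linarith : ε / 2 < ε)⟩
  by_cases hx : x ∈ K
  · exact (dist_coe_le_dist (f := restrict f) (g := restrict g) ⟨x, hx⟩).trans
      ((mem_ball.1 hfg).le.trans (by linarith))
  · exact (dist_le_norm_add_norm _ _).trans
      (by linarith [hAK f hf x hx, hAK g (hsA hg) x hx])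

variable {α E : Type*} [TopologicalSpace α] [MeasurableSpace α] [BorelSpace α]
  [NormedAddCommGroup E] [SecondCountableTopologyEither α E]

variable (𝕜 : Type*) [NormedField 𝕜] [NormedSpace 𝕜 E] (μ : Measure α)

/-- Unlike `BoundedContinuousFunction.toLp`, this needs no finiteness of `μ`. -/
noncomputable def toLpTop : (α →ᵇ E) →L[𝕜] Lp E ⊤ μ :=
  LinearMap.mkContinuous
    { toFun := fun f => (memLp_top f).toLp f
      map_add' := fun f g => MemLp.toLp_add (memLp_top f) (memLp_top g)
      map_smul' := fun c f => MemLp.toLp_const_smul c (memLp_top f) } 1 fun f => by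
    rw [one_mul, LinearMap.coe_mk, AddHom.coe_mk, Lp.norm_toLp]
    refine ENNReal.toReal_le_of_le_ofReal (norm_nonneg f) ?_
    simpa using eLpNorm_le_of_ae_bound (μ := μ) (p := ⊤) (ae_of_all _ f.norm_coe_le_norm)

lemma coeFn_toLpTop (f : α →ᵇ E) :
    toLpTop 𝕜 μ f =ᵐ[μ] f :=
  (memLp_top f).coeFn_toLp

end BoundedContinuousFunction

namespace CauchyTransform

lemma rpow_neg_three_halves {x : ℝ} (hx : 0 < x) : x ^ (-(3 / 2) : ℝ) = x⁻¹ * (√x)⁻¹ := by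
  rw [show (-(3 / 2) : ℝ) = -1 + -(1 / 2) by norm_num, Real.rpow_add hx, Real.rpow_neg_one,
    Real.rpow_neg hx.le, Real.sqrt_eq_rpow]

lemma inv_le_rpow_neg_three_halves_add_one {x : ℝ} (hx : 0 ≤ x) :
    x⁻¹ ≤ x ^ (-(3 / 2) : ℝ) + 1 := by
  rcases hx.eq_or_lt with rfl | hx
  · simp
  rcases le_total x 1 with h1 | h1
  · have : x ^ (-1 : ℝ) ≤ x ^ (-(3 / 2) : ℝ) :=
      Real.rpow_le_rpow_of_exponent_ge hx h1 (by norm_num)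
    rw [Real.rpow_neg_one] at this
    linarith
  · have := inv_le_one_of_one_le₀ h1
    have := Real.rpow_nonneg hx.le (-(3 / 2) : ℝ)
    linarith

/-- Write `t = √t · √t` and use `√t · √a ≤ √(2b) · √b ≤ 2b`. -/
lemma div_mul_le_sqrt_mul_rpow {a b t : ℝ} (ha : 0 < a) (hab : a ≤ b) (ht : 0 ≤ t)
    (htb : t ≤ 2 * b) : t / (a * b) ≤ 2 * √t * a ^ (-(3 / 2) : ℝ) := by
  have hb : 0 < b := ha.trans_le hab
  have hsa : √a ≤ √b := Real.sqrt_le_sqrt hab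
  have hst : √t ≤ √2 * √b := by rw [← Real.sqrt_mul zero_le_two]; exact Real.sqrt_le_sqrt htb
  have hsa0 : 0 < √a := Real.sqrt_pos.2 ha
  have h2 : √2 ≤ 2 := by rw [Real.sqrt_le_left zero_le_two]; norm_num
  rw [rpow_neg_three_halves ha, div_le_iff₀ (mul_pos ha hb)]
  have key : √t * √a ≤ 2 * b := by
    calc √t * √a ≤ (√2 * √b) * √b := mul_le_mul hst hsa hsa0.le (by positivity)
      _ = √2 * b := by rw [mul_assoc, Real.mul_self_sqrt hb.le]
      _ ≤ 2 * b := by gcongr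
  have hts : t = √t * √t := (Real.mul_self_sqrt ht).symm
  calc t = √t * √t * (√a * (√a)⁻¹) := by rw [mul_inv_cancel₀ hsa0.ne', mul_one, ← hts]
    _ = (√t * √a) * (√t * (√a)⁻¹) := by ring
    _ ≤ (2 * b) * (√t * (√a)⁻¹) := by gcongr
    _ = 2 * √t * (a⁻¹ * (√a)⁻¹) * (a * b) := by field_simp

lemma norm_inv_sub_inv_le {z z' w : ℂ} (hz : z ≠ w) (hz' : z' ≠ w) :
    ‖(z - w)⁻¹ - (z' - w)⁻¹‖ ≤
      2 * √‖z - z'‖ * (‖z - w‖ ^ (-(3 / 2) : ℝ) + ‖z' - w‖ ^ (-(3 / 2) : ℝ)) := by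
  wlog h : ‖z - w‖ ≤ ‖z' - w‖ generalizing z z'
  · rw [← norm_neg, neg_sub, norm_sub_rev z, add_comm]
    exact this hz' hz (le_of_not_ge h)
  have ha : 0 < ‖z - w‖ := norm_pos_iff.2 (sub_ne_zero.2 hz)
  have hb : 0 < ‖z' - w‖ := norm_pos_iff.2 (sub_ne_zero.2 hz')
  have hdiff : (z - w)⁻¹ - (z' - w)⁻¹ = (z' - z) / ((z - w) * (z' - w)) := by
    field_simp [sub_ne_zero.2 hz, sub_ne_zero.2 hz']
    ring
  have htri : ‖z - z'‖ ≤ 2 * ‖z' - w‖ := by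
    have := norm_sub_le_norm_sub_add_norm_sub z w z'
    rw [norm_sub_rev w z'] at this
    linarith
  rw [hdiff, norm_div, norm_mul, norm_sub_rev z' z]
  calc ‖z - z'‖ / (‖z - w‖ * ‖z' - w‖) ≤ 2 * √‖z - z'‖ * ‖z - w‖ ^ (-(3 / 2) : ℝ) :=
        div_mul_le_sqrt_mul_rpow ha h (norm_nonneg _) htri
    _ ≤ _ := by
        gcongr
        exact le_add_of_nonneg_right (Real.rpow_nonneg (norm_nonneg _) _)

noncomputable def weight (w : ℂ) : ℝ := (1 + ‖w‖) ^ (-3 : ℝ)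

/-- Majorant of the Cauchy kernel `|z - w|⁻¹` that also controls its Hölder-`1/2` differences. -/
noncomputable def kernelMajorant (z w : ℂ) : ℝ := ‖z - w‖ ^ (-(3 / 2) : ℝ) + 1

noncomputable def localSingularity : ℂ → ℝ :=
  (ball (0 : ℂ) 1).indicator fun u => ‖u‖ ^ (-(3 / 2) : ℝ)

noncomputable def cauchyBound : ℝ := (∫ u, localSingularity u) + 2 * ∫ w, weight w

lemma one_le_kernelMajorant (z w : ℂ) : 1 ≤ kernelMajorant z w :=
  le_add_of_nonneg_left (Real.rpow_nonneg (norm_nonneg _) _)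

lemma weight_nonneg (w : ℂ) : 0 ≤ weight w := Real.rpow_nonneg (by positivity) _

lemma weight_le_one (w : ℂ) : weight w ≤ 1 :=
  Real.rpow_le_one_of_one_le_of_nonpos (by simp) (by norm_num)

lemma integrable_weight : Integrable weight := by
  apply integrable_one_add_norm
  rw [Complex.finrank_real_complex]
  norm_num

lemma integrable_localSingularity : Integrable localSingularity := by
  refine (integrable_indicator_iff measurableSet_ball).2 <|
    integrableOn_ball_of_norm_le_rpow (C := 1) (α := 3 / 2) (by simp) (by simp; norm_num)
      (ae_of_all _ fun u => ?_) (measurable_norm.pow_const _).aestronglyMeasurable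
  simp [Real.norm_eq_abs, abs_of_nonneg (Real.rpow_nonneg (norm_nonneg u) _)]

lemma weight_mul_kernelMajorant_le (z w : ℂ) :
    weight w * kernelMajorant z w ≤ localSingularity (w - z) + 2 * weight w := by
  have h0 := weight_nonneg w
  have h1 := weight_le_one w
  have hρ := Real.rpow_nonneg (norm_nonneg (z - w)) (-(3 / 2) : ℝ)
  rw [kernelMajorant, localSingularity]
  by_cases hzw : w - z ∈ ball (0 : ℂ) 1
  · rw [indicator_of_mem hzw, norm_sub_rev w z]
    nlinarith [mul_le_mul_of_nonneg_right h1 hρ]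
  · rw [indicator_of_notMem hzw]
    have : 1 ≤ ‖z - w‖ := by simpa [norm_sub_rev] using hzw
    have := Real.rpow_le_one_of_one_le_of_nonpos this (by norm_num : (-(3 / 2) : ℝ) ≤ 0)
    nlinarith

lemma integrable_weight_mul_kernelMajorant (z : ℂ) :
    Integrable fun w => weight w * kernelMajorant z w := by
  refine Integrable.mono' (((integrable_localSingularity.comp_sub_right z).add
    (integrable_weight.const_mul 2))) (by unfold weight kernelMajorant; fun_prop)
    (ae_of_all _ fun w => ?_)
  rw [Real.norm_of_nonneg
    (mul_nonneg (weight_nonneg w) (zero_le_one.trans (one_le_kernelMajorant z w)))]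
  exact weight_mul_kernelMajorant_le z w

lemma integral_weight_mul_kernelMajorant_le (z : ℂ) :
    ∫ w, weight w * kernelMajorant z w ≤ cauchyBound := by
  calc ∫ w, weight w * kernelMajorant z w ≤ ∫ w, (localSingularity (w - z) + 2 * weight w) :=
        integral_mono (integrable_weight_mul_kernelMajorant z)
          ((integrable_localSingularity.comp_sub_right z).add (integrable_weight.const_mul 2))
          (weight_mul_kernelMajorant_le z)
    _ = cauchyBound := by
        rw [integral_add (integrable_localSingularity.comp_sub_right z)
          (integrable_weight.const_mul 2), integral_sub_right_eq_self, integral_const_mul,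
          cauchyBound]

lemma cauchyBound_nonneg : 0 ≤ cauchyBound :=
  (integral_nonneg fun w => mul_nonneg (weight_nonneg w)
    (zero_le_one.trans (one_le_kernelMajorant 0 w))).trans (integral_weight_mul_kernelMajorant_le 0)

lemma norm_pi_inv_mul_le (x : ℂ) : ‖(Real.pi : ℂ)⁻¹ * x‖ ≤ ‖x‖ := by
  rw [norm_mul, norm_inv, Complex.norm_real, Real.norm_of_nonneg Real.pi_pos.le]
  exact mul_le_of_le_one_left (norm_nonneg _)
    (inv_le_one_of_one_le₀ (by linarith [Real.pi_gt_three]))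

lemma rpow_neg_four_le_weight (w : ℂ) : (1 + ‖w‖) ^ (-4 : ℝ) ≤ weight w :=
  Real.rpow_le_rpow_of_exponent_le (by simp) (by norm_num)

lemma rpow_neg_four_mul_inv_le (z w : ℂ) :
    (1 + ‖w‖) ^ (-4 : ℝ) * ‖z - w‖⁻¹ ≤ weight w * kernelMajorant z w :=
  mul_le_mul (rpow_neg_four_le_weight w)
    (inv_le_rpow_neg_three_halves_add_one (norm_nonneg _)) (by positivity) (weight_nonneg w)

/-- Either `|w| ≥ |z|/2` and `(1 + |w|)⁻¹ ≤ 2/|z|`, or `|w| < |z|/2` and `|z - w|⁻¹ ≤ 2/|z|`. -/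
lemma rpow_neg_four_mul_inv_le_div {z : ℂ} (hz : z ≠ 0) (w : ℂ) :
    (1 + ‖w‖) ^ (-4 : ℝ) * ‖z - w‖⁻¹ ≤ 2 / ‖z‖ * (weight w * kernelMajorant z w) := by
  have hz0 : 0 < ‖z‖ := norm_pos_iff.2 hz
  have hw1 : 0 < 1 + ‖w‖ := by positivity
  have hM := one_le_kernelMajorant z w
  have hW := weight_nonneg w
  rcases le_or_gt (‖z‖ / 2) ‖w‖ with hw | hw
  · have h4 : (1 + ‖w‖) ^ (-4 : ℝ) = (1 + ‖w‖)⁻¹ * weight w := by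
      rw [weight, ← Real.rpow_neg_one, ← Real.rpow_add hw1]
      norm_num
    have hinv : (1 + ‖w‖)⁻¹ ≤ 2 / ‖z‖ := by
      rw [← inv_div]
      exact inv_anti₀ (by positivity) (by linarith)
    rw [h4]
    calc (1 + ‖w‖)⁻¹ * weight w * ‖z - w‖⁻¹
        ≤ 2 / ‖z‖ * weight w * kernelMajorant z w := by
          gcongr
          exact inv_le_rpow_neg_three_halves_add_one (norm_nonneg _)
      _ = _ := by ring
  · have hzw : ‖z‖ / 2 ≤ ‖z - w‖ := by linarith [norm_sub_norm_le z w]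
    have hinv : ‖z - w‖⁻¹ ≤ 2 / ‖z‖ := by
      rw [← inv_div]
      exact inv_anti₀ (by positivity) hzw
    calc (1 + ‖w‖) ^ (-4 : ℝ) * ‖z - w‖⁻¹ ≤ weight w * (2 / ‖z‖) :=
          mul_le_mul (rpow_neg_four_le_weight w) hinv (by positivity) hW
      _ ≤ weight w * (2 / ‖z‖) * kernelMajorant z w := le_mul_of_one_le_right (by positivity) hM
      _ = _ := by ring

structure QuarticDecay (C : ℝ) (G : ℂ → ℂ) : Prop where
  nonneg : 0 ≤ C
  aestronglyMeasurable : AEStronglyMeasurable G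
  ae_norm_le : ∀ᵐ w, ‖G w‖ ≤ C * (1 + ‖w‖) ^ (-4 : ℝ)

variable {C D : ℝ} {G H : ℂ → ℂ}

namespace QuarticDecay

lemma map_conj (hG : QuarticDecay C G) : QuarticDecay C fun w => conj (G w) where
  nonneg := hG.nonneg
  aestronglyMeasurable := Complex.continuous_conj.comp_aestronglyMeasurable hG.aestronglyMeasurable
  ae_norm_le := by simpa only [RCLike.norm_conj] using hG.ae_norm_le

lemma ae_norm_div_sub_le (hG : QuarticDecay C G) (z : ℂ) :
    ∀ᵐ w, ‖G w / (z - w)‖ ≤ C * ((1 + ‖w‖) ^ (-4 : ℝ) * ‖z - w‖⁻¹) := by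
  filter_upwards [hG.ae_norm_le] with w hw
  rw [norm_div, div_eq_mul_inv, ← mul_assoc]
  exact mul_le_mul_of_nonneg_right hw (by positivity)

lemma integrable_div_sub (hG : QuarticDecay C G) (z : ℂ) :
    Integrable fun w => G w / (z - w) := by
  simp_rw [div_eq_mul_inv]
  refine Integrable.mono' ((integrable_weight_mul_kernelMajorant z).const_mul C)
    (hG.aestronglyMeasurable.mul (measurable_const.sub measurable_id).inv.aestronglyMeasurable) ?_
  filter_upwards [hG.ae_norm_div_sub_le z] with w hw
  rw [← div_eq_mul_inv]
  exact hw.trans (mul_le_mul_of_nonneg_left (rpow_neg_four_mul_inv_le z w) hG.nonneg)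

lemma ae_norm_div_sub_sub_div_sub_le (hG : QuarticDecay C G) (z z' : ℂ) :
    ∀ᵐ w, ‖G w / (z - w) - G w / (z' - w)‖ ≤
      2 * C * √‖z - z'‖ * (weight w * kernelMajorant z w + weight w * kernelMajorant z' w) := by
  filter_upwards [hG.ae_norm_le, volume.ae_ne z, volume.ae_ne z'] with w hw hwz hwz'
  have hρ (z : ℂ) : ‖z - w‖ ^ (-(3 / 2) : ℝ) ≤ kernelMajorant z w :=
    le_add_of_nonneg_right zero_le_one
  rw [div_eq_mul_inv, div_eq_mul_inv, ← mul_sub, norm_mul]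
  calc ‖G w‖ * ‖(z - w)⁻¹ - (z' - w)⁻¹‖
      ≤ C * weight w * (2 * √‖z - z'‖ * (kernelMajorant z w + kernelMajorant z' w)) :=
        mul_le_mul (hw.trans (mul_le_mul_of_nonneg_left (rpow_neg_four_le_weight w) hG.nonneg))
          ((norm_inv_sub_inv_le hwz.symm hwz'.symm).trans
            (mul_le_mul_of_nonneg_left (add_le_add (hρ z) (hρ z')) (by positivity)))
          (norm_nonneg _) (mul_nonneg hG.nonneg (weight_nonneg w))
    _ = _ := by ring

end QuarticDecay

lemma exists_quarticDecay_of_schwartzMap (q : 𝓢(ℂ, ℂ)) : ∃ C, QuarticDecay C q := by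
  set C := 2 ^ 4 * (Finset.Iic (4, 0)).sup (fun m => SchwartzMap.seminorm ℝ m.1 m.2) q
  refine ⟨C, by positivity, q.continuous.aestronglyMeasurable, ae_of_all _ fun w => ?_⟩
  have h := SchwartzMap.one_add_le_sup_seminorm_apply (𝕜 := ℝ) (m := (4, 0)) le_rfl le_rfl q w
  rw [norm_iteratedFDeriv_zero] at h
  rw [show (-4 : ℝ) = -((4 : ℕ) : ℝ) by norm_num, Real.rpow_neg (by positivity),
    Real.rpow_natCast, ← div_eq_mul_inv, le_div_iff₀ (by positivity), mul_comm]
  exact h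

lemma norm_dbarInv_le (hG : QuarticDecay C G) (z : ℂ) : ‖dbarInv G z‖ ≤ C * cauchyBound :=
  calc ‖dbarInv G z‖ ≤ ‖∫ w, G w / (z - w)‖ := norm_pi_inv_mul_le _
    _ ≤ ∫ w, C * (weight w * kernelMajorant z w) := by
        refine norm_integral_le_of_norm_le ((integrable_weight_mul_kernelMajorant z).const_mul C) ?_
        filter_upwards [hG.ae_norm_div_sub_le z] with w hw
        exact hw.trans (mul_le_mul_of_nonneg_left (rpow_neg_four_mul_inv_le z w) hG.nonneg)
    _ ≤ C * cauchyBound := by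
        rw [integral_const_mul]
        exact mul_le_mul_of_nonneg_left (integral_weight_mul_kernelMajorant_le z) hG.nonneg

lemma norm_dbarInv_le_div (hG : QuarticDecay C G) {z : ℂ} (hz : z ≠ 0) :
    ‖dbarInv G z‖ ≤ 2 * C * cauchyBound / ‖z‖ :=
  calc ‖dbarInv G z‖ ≤ ‖∫ w, G w / (z - w)‖ := norm_pi_inv_mul_le _
    _ ≤ ∫ w, 2 * C / ‖z‖ * (weight w * kernelMajorant z w) := by
        refine norm_integral_le_of_norm_le
          ((integrable_weight_mul_kernelMajorant z).const_mul _) ?_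
        filter_upwards [hG.ae_norm_div_sub_le z] with w hw
        refine hw.trans ?_
        have := mul_le_mul_of_nonneg_left (rpow_neg_four_mul_inv_le_div hz w) hG.nonneg
        exact this.trans_eq (by ring)
    _ ≤ 2 * C * cauchyBound / ‖z‖ := by
        rw [integral_const_mul, mul_div_right_comm (2 * C)]
        exact mul_le_mul_of_nonneg_left (integral_weight_mul_kernelMajorant_le z)
          (by have := hG.nonneg; positivity)

lemma norm_dbarInv_sub_le (hG : QuarticDecay C G) (z z' : ℂ) :
    ‖dbarInv G z - dbarInv G z'‖ ≤ 4 * C * cauchyBound * √‖z - z'‖ := by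
  have hM := integrable_weight_mul_kernelMajorant
  rw [dbarInv, dbarInv, ← mul_sub,
    ← integral_sub (hG.integrable_div_sub z) (hG.integrable_div_sub z')]
  calc _ ≤ ‖∫ w, (G w / (z - w) - G w / (z' - w))‖ := norm_pi_inv_mul_le _
    _ ≤ ∫ w, 2 * C * √‖z - z'‖ *
          (weight w * kernelMajorant z w + weight w * kernelMajorant z' w) :=
        norm_integral_le_of_norm_le (((hM z).add (hM z')).const_mul _)
          (hG.ae_norm_div_sub_sub_div_sub_le z z')
    _ ≤ 2 * C * √‖z - z'‖ * (cauchyBound + cauchyBound) := by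
        rw [integral_const_mul, integral_add (hM z) (hM z')]
        have := hG.nonneg
        gcongr <;> exact integral_weight_mul_kernelMajorant_le _
    _ = 4 * C * cauchyBound * √‖z - z'‖ := by ring

lemma dbarInv_add (hG : QuarticDecay C G) (hH : QuarticDecay D H) :
    dbarInv (G + H) = dbarInv G + dbarInv H := by
  ext z
  simp only [dbarInv, Pi.add_apply, add_div]
  rw [integral_add (hG.integrable_div_sub z) (hH.integrable_div_sub z), mul_add]

lemma dbarInv_smul (a : ℂ) (G : ℂ → ℂ) : dbarInv (a • G) = a • dbarInv G := by
  ext z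
  simp only [dbarInv, Pi.smul_apply, smul_eq_mul, mul_div_assoc, integral_const_mul]
  ring

lemma dzInv_eq_conj_dbarInv (G : ℂ → ℂ) :
    dzInv G = fun z => conj (dbarInv (fun w => conj (G w)) z) := by
  ext z
  simp only [dzInv, dbarInv, map_mul, map_inv₀, Complex.conj_ofReal, ← integral_conj, map_div₀,
    Complex.conj_conj, map_sub]

lemma norm_dzInv_le (hG : QuarticDecay C G) (z : ℂ) : ‖dzInv G z‖ ≤ C * cauchyBound := by
  rw [dzInv_eq_conj_dbarInv, RCLike.norm_conj]
  exact norm_dbarInv_le hG.map_conj z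

lemma norm_dzInv_sub_le (hG : QuarticDecay C G) (z z' : ℂ) :
    ‖dzInv G z - dzInv G z'‖ ≤ 4 * C * cauchyBound * √‖z - z'‖ := by
  rw [dzInv_eq_conj_dbarInv, ← map_sub, RCLike.norm_conj]
  exact norm_dbarInv_sub_le hG.map_conj z z'

lemma continuous_dzInv (hG : QuarticDecay C G) : Continuous (dzInv G) :=
  continuous_of_norm_sub_le_mul_sqrt (norm_dzInv_sub_le hG)

lemma dzInv_add (hG : QuarticDecay C G) (hH : QuarticDecay D H) :
    dzInv (G + H) = dzInv G + dzInv H := by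
  have h : dbarInv (fun w => conj (G w) + conj (H w)) =
      dbarInv (fun w => conj (G w)) + dbarInv (fun w => conj (H w)) :=
    dbarInv_add hG.map_conj hH.map_conj
  ext z
  simp only [dzInv_eq_conj_dbarInv, Pi.add_apply, map_add, h]

lemma dzInv_smul (a : ℂ) (G : ℂ → ℂ) : dzInv (a • G) = a • dzInv G := by
  ext z
  simp only [dzInv, Pi.smul_apply, smul_eq_mul, mul_div_assoc, integral_const_mul]
  ring

lemma dzInv_congr_ae (h : G =ᵐ[volume] H) : dzInv G = dzInv H := by
  ext z
  rw [dzInv, dzInv, integral_congr_ae (h.mono fun w hw => by rw [hw])]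

lemma norm_ek (a z : ℂ) : ‖ek a z‖ = 1 := by
  rw [ek, Complex.norm_exp, Real.exp_eq_one_iff]
  simp [Complex.mul_re, Complex.mul_im]
  ring

lemma continuous_ek (a : ℂ) : Continuous (ek a) := by
  unfold ek
  fun_prop

variable {q : ℂ → ℂ} {Cq : ℝ} (k : ℂ)

lemma quarticDecay_inner (hq : QuarticDecay Cq q) (F : Lp ℂ ⊤ (volume : Measure ℂ)) :
    QuarticDecay (Cq * ‖F‖) fun w => ek k w * conj (q w) * F w where
  nonneg := mul_nonneg hq.nonneg (norm_nonneg F)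
  aestronglyMeasurable := ((continuous_ek k).aestronglyMeasurable.mul
    hq.map_conj.aestronglyMeasurable).mul (Lp.aestronglyMeasurable F)
  ae_norm_le := by
    filter_upwards [hq.ae_norm_le, Lp.ae_norm_le_norm_top F] with w hqw hFw
    rw [norm_mul, norm_mul, norm_ek, one_mul, RCLike.norm_conj]
    calc ‖q w‖ * ‖F w‖ ≤ Cq * (1 + ‖w‖) ^ (-4 : ℝ) * ‖F‖ :=
          mul_le_mul hqw hFw (norm_nonneg _) (mul_nonneg hq.nonneg (by positivity))
      _ = _ := by ring

lemma quarticDecay_outer (hq : QuarticDecay Cq q) (F : Lp ℂ ⊤ (volume : Measure ℂ)) :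
    QuarticDecay (Cq ^ 2 * cauchyBound * ‖F‖)
      fun z => ek (-k) z * q z * dzInv (fun w => ek k w * conj (q w) * F w) z where
  nonneg := by have := cauchyBound_nonneg; positivity
  aestronglyMeasurable := ((continuous_ek (-k)).aestronglyMeasurable.mul
    hq.aestronglyMeasurable).mul (continuous_dzInv (quarticDecay_inner k hq F)).aestronglyMeasurable
  ae_norm_le := by
    filter_upwards [hq.ae_norm_le] with z hqz
    rw [norm_mul, norm_mul, norm_ek, one_mul]
    calc ‖q z‖ * ‖dzInv (fun w => ek k w * conj (q w) * F w) z‖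
        ≤ Cq * (1 + ‖z‖) ^ (-4 : ℝ) * (Cq * ‖F‖ * cauchyBound) :=
          mul_le_mul hqz (norm_dzInv_le (quarticDecay_inner k hq F) z) (norm_nonneg _)
            (mul_nonneg hq.nonneg (by positivity))
      _ = _ := by ring

lemma norm_Sk_le (hq : QuarticDecay Cq q) (F : Lp ℂ ⊤ (volume : Measure ℂ)) (z : ℂ) :
    ‖Sk k q F z‖ ≤ (Cq * cauchyBound) ^ 2 * ‖F‖ :=
  (norm_dbarInv_le (quarticDecay_outer k hq F) z).trans_eq (by ring)

lemma norm_Sk_le_div (hq : QuarticDecay Cq q) (F : Lp ℂ ⊤ (volume : Measure ℂ)) {z : ℂ}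
    (hz : z ≠ 0) : ‖Sk k q F z‖ ≤ 2 * (Cq * cauchyBound) ^ 2 * ‖F‖ / ‖z‖ :=
  (norm_dbarInv_le_div (quarticDecay_outer k hq F) hz).trans_eq (by ring)

lemma norm_Sk_sub_le (hq : QuarticDecay Cq q) (F : Lp ℂ ⊤ (volume : Measure ℂ)) (z z' : ℂ) :
    ‖Sk k q F z - Sk k q F z'‖ ≤ 4 * (Cq * cauchyBound) ^ 2 * ‖F‖ * √‖z - z'‖ :=
  (norm_dbarInv_sub_le (quarticDecay_outer k hq F) z z').trans_eq (by ring)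

lemma continuous_Sk (hq : QuarticDecay Cq q) (F : Lp ℂ ⊤ (volume : Measure ℂ)) :
    Continuous (Sk k q F) :=
  continuous_of_norm_sub_le_mul_sqrt (norm_Sk_sub_le k hq F)

lemma Sk_congr_ae {f g : ℂ → ℂ} (h : f =ᵐ[volume] g) : Sk k q f = Sk k q g := by
  rw [Sk, Sk, dzInv_congr_ae (h.mono fun w hw => by rw [hw])]

lemma Sk_add (hq : QuarticDecay Cq q) (F G : Lp ℂ ⊤ (volume : Measure ℂ)) :
    Sk k q ⇑(F + G) = Sk k q F + Sk k q G := by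
  rw [Sk_congr_ae k (Lp.coeFn_add F G), Sk, Sk, Sk,
    ← dbarInv_add (quarticDecay_outer k hq F) (quarticDecay_outer k hq G)]
  have hinner : (fun w => ek k w * conj (q w) * (F + G : ℂ → ℂ) w) =
      (fun w => ek k w * conj (q w) * F w) + fun w => ek k w * conj (q w) * G w := by
    ext w
    simp only [Pi.add_apply]
    ring
  rw [hinner, dzInv_add (quarticDecay_inner k hq F) (quarticDecay_inner k hq G)]
  congr 1
  ext z
  simp only [Pi.add_apply]
  ring

lemma Sk_smul (a : ℂ) (F : Lp ℂ ⊤ (volume : Measure ℂ)) : Sk k q ⇑(a • F) = a • Sk k q F := by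
  rw [Sk_congr_ae k (Lp.coeFn_smul a F), Sk, Sk, ← dbarInv_smul]
  have hinner : (fun w => ek k w * conj (q w) * (a • (F : ℂ → ℂ)) w) =
      a • fun w => ek k w * conj (q w) * F w := by
    ext w
    simp only [Pi.smul_apply, smul_eq_mul]
    ring
  rw [hinner, dzInv_smul]
  congr 1
  ext z
  simp only [Pi.smul_apply, smul_eq_mul]
  ring

noncomputable def skBCF (hq : QuarticDecay Cq q) :
    Lp ℂ ⊤ (volume : Measure ℂ) →ₗ[ℂ] ℂ →ᵇ ℂ where
  toFun F := .ofNormedAddCommGroup (Sk k q F) (continuous_Sk k hq F) _ (norm_Sk_le k hq F)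
  map_add' F G := by
    ext z
    exact congrFun (Sk_add k hq F G) z
  map_smul' a F := by
    ext z
    exact congrFun (Sk_smul k a F) z

theorem isCompactOperator_skBCF (hq : QuarticDecay Cq q) : IsCompactOperator (skBCF k hq) := by
  set K := (Cq * cauchyBound) ^ 2
  have hK : 0 ≤ K := by positivity
  rw [isCompactOperator_iff_isCompact_closure_image_closedBall _ one_pos]
  refine TotallyBounded.isCompact_of_isClosed (TotallyBounded.closure ?_) isClosed_closure
  refine BoundedContinuousFunction.totallyBounded_of_equicontinuous_of_small_off_compact
    (isBounded_iff_forall_norm_le.2 ⟨K, ?_⟩) ?_ fun ε hε => ?_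
  · rintro _ ⟨F, hF, rfl⟩
    refine (BoundedContinuousFunction.norm_ofNormedAddCommGroup_le _ (by positivity)
      (norm_Sk_le k hq F)).trans ?_
    exact mul_le_of_le_one_right hK (mem_closedBall_zero_iff.1 hF)
  · refine (uniformEquicontinuous_of_continuity_modulus (fun d => 4 * K * √d) ?_ _ ?_
      ).equicontinuous
    · have : Continuous fun d : ℝ => 4 * K * √d := by fun_prop
      simpa using this.tendsto 0
    · rintro z z' ⟨_, F, hF, rfl⟩
      rw [dist_eq_norm, dist_eq_norm]
      refine (norm_Sk_sub_le k hq F z z').trans ?_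
      exact mul_le_mul_of_nonneg_right (mul_le_of_le_one_right (by positivity)
        (mem_closedBall_zero_iff.1 hF)) (Real.sqrt_nonneg _)
  · refine ⟨closedBall 0 (2 * K / ε), isCompact_closedBall _ _, ?_⟩
    rintro _ ⟨F, hF, rfl⟩ z hz
    have hz' : 2 * K / ε < ‖z‖ := by simpa using hz
    have hz0 : 0 < ‖z‖ := lt_of_le_of_lt (by positivity) hz'
    refine (norm_Sk_le_div k hq F (norm_pos_iff.1 hz0)).trans ?_
    rw [div_le_iff₀ hz0]
    rw [div_lt_iff₀ hε] at hz'
    have := mem_closedBall_zero_iff.1 hF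
    nlinarith [mul_le_mul_of_nonneg_left this (by positivity : 0 ≤ 2 * K)]

end CauchyTransform

/-- `F ↦ S^k_q[F]` defines a bounded linear operator on `L^∞(ℂ)` which is
compact. -/
theorem stmt19 (q : 𝓢(ℂ, ℂ)) (k : ℂ) :
    ∃ T : Lp ℂ ⊤ (volume : Measure ℂ) →L[ℂ] Lp ℂ ⊤ (volume : Measure ℂ),
      IsCompactOperator T ∧
      ∀ F : Lp ℂ ⊤ (volume : Measure ℂ), (T F : ℂ → ℂ) =ᵐ[volume] Sk k (⇑q) (⇑F) := by
  obtain ⟨Cq, hq⟩ := CauchyTransform.exists_quarticDecay_of_schwartzMap q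
  have hS := CauchyTransform.isCompactOperator_skBCF k hq
  let J := BoundedContinuousFunction.toLpTop (α := ℂ) (E := ℂ) ℂ volume
  exact ⟨J.comp (ContinuousLinearMap.mkOfIsCompactOperator hS), hS.clm_comp J,
    fun F => BoundedContinuousFunction.coeFn_toLpTop ℂ volume _⟩
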